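/- arXiv:2308.16034 — 4 statements merged into one kernel-verified Lean document; each statement's English description precedes it below -/
import Mathlib

section
/- Let p be an odd prime. Then the sum over n from 1 to p-2 of B_n/n is congruent to the Wilson quotient w_p modulo p. -/
open Finset
namespace SDB


variable {p : ℕ} [hp : Fact p.Prime]

lemma norm_sum_le_of_forall {ι : Type*} (s : Finset ι) (f : ι → ℚ_[p]) {C : ℝ}
    (hC : 0 ≤ C) (h : ∀ i ∈ s, ‖f i‖ ≤ C) : ‖∑ i ∈ s, f i‖ ≤ C := by
  classical
  induction s using Finset.cons_induction with
  | empty => simpa using hC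
  | cons a s hx ih =>
    rw [Finset.sum_cons]
    refine le_trans (Padic.nonarchimedean _ _) (max_le (h a (mem_cons_self _ _)) ?_)
    exact ih fun i hi => h i (mem_cons_of_mem hi)

lemma ratCast_zmod (q : ℚ) (h : ‖(q : ℚ_[p])‖ ≤ 1) :
    (q : ZMod p) = PadicInt.toZMod (⟨(q : ℚ_[p]), h⟩ : ℤ_[p]) := by
  have hqd : (q : ℚ_[p]) * ((q.den : ℤ) : ℚ_[p]) = ((q.num : ℤ) : ℚ_[p]) := by
    have : (q * (q.den : ℚ) : ℚ) = ((q.num : ℚ) : ℚ) := by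
      rw [mul_comm, Rat.den_mul_eq_num]
    calc (q : ℚ_[p]) * ((q.den : ℤ) : ℚ_[p]) = ((q * q.den : ℚ) : ℚ_[p]) := by push_cast; ring
      _ = ((q.num : ℤ) : ℚ_[p]) := by rw [this]; push_cast; ring
  have hden : ¬ (p : ℤ) ∣ (q.den : ℤ) := by
    intro hdvd
    have hlt : ‖((q.num : ℤ) : ℚ_[p])‖ < 1 := by
      rw [← hqd, norm_mul]
      have h2 : ‖((q.den : ℤ) : ℚ_[p])‖ < 1 := Padic.norm_intCast_lt_one_iff.2 hdvd
      calc ‖(q : ℚ_[p])‖ * ‖((q.den : ℤ) : ℚ_[p])‖ ≤ 1 * ‖((q.den : ℤ) : ℚ_[p])‖ :=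
            mul_le_mul_of_nonneg_right h (norm_nonneg _)
        _ < 1 := by rw [one_mul]; exact h2
    rw [Padic.norm_intCast_lt_one_iff] at hlt
    have h1 : p ∣ q.num.natAbs := by
      have := Int.natAbs_dvd_natAbs.mpr hlt
      simpa using this
    have h2 : p ∣ q.den := by
      have := Int.natAbs_dvd_natAbs.mpr hdvd
      simpa using this
    have : p ∣ 1 := q.reduced ▸ Nat.dvd_gcd h1 h2
    exact hp.1.ne_one (Nat.dvd_one.mp this)
  -- now the computation in ZMod p
  have hdz : ((q.den : ℕ) : ZMod p) ≠ 0 := by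
    rw [Ne, ZMod.natCast_eq_zero_iff]
    exact fun hh => hden (Int.ofNat_dvd.mpr hh)
  set x : ℤ_[p] := (⟨(q : ℚ_[p]), h⟩ : ℤ_[p]) with hxdef
  have key : (PadicInt.toZMod x) * ((q.den : ℕ) : ZMod p) = ((q.num : ℤ) : ZMod p) := by
    have hx : x * ((q.den : ℕ) : ℤ_[p]) = ((q.num : ℤ) : ℤ_[p]) := by
      have : ((x * ((q.den : ℕ) : ℤ_[p]) : ℤ_[p]) : ℚ_[p]) = (((q.num : ℤ) : ℤ_[p]) : ℚ_[p]) := by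
        rw [PadicInt.coe_mul, PadicInt.coe_natCast, PadicInt.coe_intCast]
        exact (by exact_mod_cast hqd : (q:ℚ_[p]) * ((q.den:ℕ):ℚ_[p]) = ((q.num:ℤ):ℚ_[p]))
      exact Subtype.ext this
    calc (PadicInt.toZMod x) * ((q.den : ℕ) : ZMod p)
        = PadicInt.toZMod (x * ((q.den : ℕ) : ℤ_[p])) := by rw [map_mul, map_natCast]
      _ = ((q.num : ℤ) : ZMod p) := by rw [hx, map_intCast]
  rw [Rat.cast_def, div_eq_iff hdz]
  exact key.symm

lemma cast_eq_of_norm_sub_lt {q r : ℚ} (hq : ‖(q : ℚ_[p])‖ ≤ 1) (hr : ‖(r : ℚ_[p])‖ ≤ 1)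
    (hqr : ‖(q : ℚ_[p]) - (r : ℚ_[p])‖ < 1) : (q : ZMod p) = (r : ZMod p) := by
  rw [ratCast_zmod q hq, ratCast_zmod r hr]
  set x : ℤ_[p] := (⟨(q : ℚ_[p]), hq⟩ : ℤ_[p])
  set y : ℤ_[p] := (⟨(r : ℚ_[p]), hr⟩ : ℤ_[p])
  have hxy : ‖x - y‖ < 1 := hqr
  have hmem : x - y ∈ RingHom.ker (PadicInt.toZMod : ℤ_[p] →+* ZMod p) := by
    rw [PadicInt.ker_toZMod, PadicInt.maximalIdeal_eq_span_p, Ideal.mem_span_singleton]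
    exact (PadicInt.norm_lt_one_iff_dvd _).mp hxy
  have h0 : PadicInt.toZMod (x - y) = 0 := hmem
  rw [map_sub] at h0
  exact sub_eq_zero.mp h0

lemma norm_nat_le_one (n : ℕ) : ‖((n : ℕ) : ℚ_[p])‖ ≤ 1 := by
  have := Padic.norm_int_le_one (p := p) (n : ℤ)
  push_cast at this
  exact this

lemma norm_nat_lt (n : ℕ) (h0 : 0 < n) (hn : n < p) : ‖((n : ℕ) : ℚ_[p])‖ = 1 := by
  refine le_antisymm (norm_nat_le_one n) ?_
  by_contra hlt
  push_neg at hlt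
  have : ‖((n : ℤ) : ℚ_[p])‖ < 1 := by push_cast; exact hlt
  rw [Padic.norm_intCast_lt_one_iff] at this
  have : p ∣ n := Int.ofNat_dvd.mp this
  exact absurd (Nat.le_of_dvd h0 this) (not_le.mpr hn)


variable {p : ℕ} [hp : Fact p.Prime]

lemma pinv_le_one : ((p : ℝ))⁻¹ ≤ 1 := by
  have : (1 : ℝ) ≤ (p : ℝ) := by exact_mod_cast hp.1.one_le
  exact inv_le_one_of_one_le₀ this

lemma pinv_nonneg' : (0:ℝ) ≤ ((p : ℝ))⁻¹ := by positivity

lemma faulhaber_eq (n : ℕ) :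
    (∑ k ∈ range p, (k : ℚ)^n)
      = (∑ i ∈ range n, bernoulli i * ((n+1).choose i) * (p : ℚ)^(n+1-i) / (n+1))
        + (p : ℚ) * bernoulli n := by
  have h := _root_.sum_range_pow p n
  rw [h, Finset.sum_range_succ]
  congr 1
  rw [Nat.choose_succ_self_right]
  have hne : ((n:ℚ) + 1) ≠ 0 := by positivity
  field_simp
  rw [show n + 1 - n = 1 by omega]; push_cast; ring

lemma term_bound (n i : ℕ) (hi : i < n) (hn : n ≤ p - 2)
    (hB : ‖((bernoulli i : ℚ) : ℚ_[p])‖ ≤ 1) :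
    ‖((bernoulli i * ((n+1).choose i) * (p : ℚ)^(n+1-i) / (n+1) : ℚ) : ℚ_[p])‖
      ≤ ((p:ℝ)⁻¹)^2 := by
  have h2 : p ≥ 2 := hp.1.two_le
  have hcast : ((bernoulli i * ((n+1).choose i) * (p : ℚ)^(n+1-i) / (n+1) : ℚ) : ℚ_[p])
      = ((bernoulli i : ℚ) : ℚ_[p]) * (((n+1).choose i : ℕ) : ℚ_[p]) * ((p:ℚ_[p]))^(n+1-i)
        / (((n+1 : ℕ)) : ℚ_[p]) := by push_cast; ring
  rw [hcast, norm_div, norm_mul, norm_mul, norm_pow, Padic.norm_p,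
    norm_nat_lt (n+1) (by omega) (by omega), div_one]
  calc ‖((bernoulli i : ℚ) : ℚ_[p])‖ * ‖(((n+1).choose i : ℕ) : ℚ_[p])‖ * ((p:ℝ))⁻¹^(n+1-i)
      ≤ 1 * 1 * ((p:ℝ))⁻¹^(n+1-i) := by
        apply mul_le_mul (mul_le_mul hB (norm_nat_le_one _) (norm_nonneg _) (by norm_num))
          le_rfl (by positivity) (by norm_num)
    _ ≤ ((p:ℝ)⁻¹)^2 := by
        rw [one_mul, one_mul]
        exact pow_le_pow_of_le_one pinv_nonneg' pinv_le_one (by omega)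

lemma sum_range_pow_zmod (j : ℕ) : ∑ k ∈ range p, ((k : ZMod p))^j = ∑ x : ZMod p, x^j := by
  refine Finset.sum_nbij' (fun k => ((k : ZMod p))) (fun x => x.val) ?_ ?_ ?_ ?_ ?_
  · intro a _; exact Finset.mem_univ _
  · intro b _; exact Finset.mem_range.mpr (ZMod.val_lt b)
  · intro a ha; exact ZMod.val_cast_of_lt (Finset.mem_range.mp ha)
  · intro b _; exact ZMod.natCast_rightInverse b
  · intro a _; rfl

lemma sum_pow_int_dvd (j : ℕ) (h2 : j ≤ p - 2) :
    (p : ℤ) ∣ ∑ k ∈ range p, (k : ℤ)^j := by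
  rw [← ZMod.intCast_zmod_eq_zero_iff_dvd]
  push_cast
  rw [sum_range_pow_zmod]
  apply FiniteField.sum_pow_lt_card_sub_one
  rw [ZMod.card p]
  have := hp.1.two_le
  omega

lemma norm_Sq_le (j : ℕ) (h2 : j ≤ p - 2) :
    ‖((∑ k ∈ range p, (k : ℚ)^j : ℚ) : ℚ_[p])‖ ≤ ((p:ℝ))⁻¹ := by
  obtain ⟨m, hm⟩ := sum_pow_int_dvd (p := p) j h2
  have hcast : ((∑ k ∈ range p, (k : ℚ)^j : ℚ) : ℚ_[p]) = ((p : ℤ) * m : ℤ) := by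
    rw [← hm]; push_cast; ring
  rw [hcast]
  push_cast
  rw [norm_mul, Padic.norm_p]
  calc ((p:ℝ))⁻¹ * ‖((m : ℤ) : ℚ_[p])‖ ≤ ((p:ℝ))⁻¹ * 1 :=
        mul_le_mul_of_nonneg_left (Padic.norm_int_le_one m) pinv_nonneg'
    _ = ((p:ℝ))⁻¹ := mul_one _

lemma norm_bernoulli_le : ∀ n : ℕ, n ≤ p - 2 → ‖((bernoulli n : ℚ) : ℚ_[p])‖ ≤ 1 := by
  intro n
  induction n using Nat.strong_induction_on with
  | _ n ih =>
    intro hn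
    rcases Nat.eq_zero_or_pos n with h0 | h0
    · subst h0; simp
    -- n ≥ 1
    have key : (p : ℚ_[p]) * ((bernoulli n : ℚ) : ℚ_[p])
        = ((∑ k ∈ range p, (k : ℚ)^n : ℚ) : ℚ_[p])
          - ((∑ i ∈ range n, bernoulli i * ((n+1).choose i) * (p : ℚ)^(n+1-i) / (n+1) : ℚ) : ℚ_[p]) := by
      have := faulhaber_eq (p := p) n
      have h2 : ((∑ k ∈ range p, (k : ℚ)^n : ℚ) : ℚ_[p])
          = ((∑ i ∈ range n, bernoulli i * ((n+1).choose i) * (p : ℚ)^(n+1-i) / (n+1) : ℚ) : ℚ_[p])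
            + ((p : ℚ) : ℚ_[p]) * ((bernoulli n : ℚ) : ℚ_[p]) := by
        rw [← Rat.cast_mul, ← Rat.cast_add, ← this]
      rw [h2]; push_cast; ring
    have hsum : ‖((∑ i ∈ range n, bernoulli i * ((n+1).choose i) * (p : ℚ)^(n+1-i) / (n+1) : ℚ) : ℚ_[p])‖
        ≤ ((p:ℝ))⁻¹ := by
      rw [Rat.cast_sum]
      apply norm_sum_le_of_forall _ _ pinv_nonneg'
      intro i hi
      have hb := term_bound (p := p) n i (Finset.mem_range.mp hi) hn
        (ih i (Finset.mem_range.mp hi) (le_trans (Nat.le_of_lt (Finset.mem_range.mp hi)) hn))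
      refine le_trans hb ?_
      calc ((p:ℝ)⁻¹)^2 ≤ ((p:ℝ)⁻¹)^1 := pow_le_pow_of_le_one pinv_nonneg' pinv_le_one one_le_two
        _ = (p:ℝ)⁻¹ := pow_one _
    have hnorm : ‖(p : ℚ_[p]) * ((bernoulli n : ℚ) : ℚ_[p])‖ ≤ ((p:ℝ))⁻¹ := by
      rw [key, sub_eq_add_neg]
      refine le_trans (Padic.nonarchimedean _ _) (max_le (norm_Sq_le n hn) ?_)
      rw [norm_neg]; exact hsum
    rw [norm_mul, Padic.norm_p] at hnorm
    have hppos : (0:ℝ) < ((p:ℝ))⁻¹ := by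
      have : (0:ℝ) < (p:ℝ) := by exact_mod_cast hp.1.pos
      positivity
    have h1 : ((p:ℝ))⁻¹ * ‖((bernoulli n : ℚ) : ℚ_[p])‖ ≤ ((p:ℝ))⁻¹ * 1 := by
      simpa using hnorm
    exact le_of_mul_le_mul_left h1 hppos

lemma faulhaber_err (n : ℕ) (h1 : 1 ≤ n) (h2 : n ≤ p - 2) :
    ‖((∑ k ∈ range p, (k : ℚ)^n : ℚ) : ℚ_[p]) - (p : ℚ_[p]) * ((bernoulli n : ℚ) : ℚ_[p])‖
      ≤ ((p:ℝ)⁻¹)^2 := by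
  have key : ((∑ k ∈ range p, (k : ℚ)^n : ℚ) : ℚ_[p]) - (p : ℚ_[p]) * ((bernoulli n : ℚ) : ℚ_[p])
      = ((∑ i ∈ range n, bernoulli i * ((n+1).choose i) * (p : ℚ)^(n+1-i) / (n+1) : ℚ) : ℚ_[p]) := by
    have := faulhaber_eq (p := p) n
    have h2' : ((∑ k ∈ range p, (k : ℚ)^n : ℚ) : ℚ_[p])
        = ((∑ i ∈ range n, bernoulli i * ((n+1).choose i) * (p : ℚ)^(n+1-i) / (n+1) : ℚ) : ℚ_[p])
          + ((p : ℚ) : ℚ_[p]) * ((bernoulli n : ℚ) : ℚ_[p]) := by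
      rw [← Rat.cast_mul, ← Rat.cast_add, ← this]
    rw [h2']; push_cast; ring
  rw [key, Rat.cast_sum]
  apply norm_sum_le_of_forall _ _ (by positivity)
  intro i hi
  exact term_bound (p := p) n i (Finset.mem_range.mp hi) h2
    (norm_bernoulli_le i (le_trans (Nat.le_of_lt (Finset.mem_range.mp hi)) h2))


variable {p : ℕ} [hp : Fact p.Prime]

lemma telescope :
    (p:ℚ)^p = (p:ℚ) + ∑ j ∈ range (p-1), ((p.choose (j+1) : ℕ) : ℚ)
      * (∑ k ∈ range p, (k:ℚ)^(j+1)) := by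
  obtain ⟨m, hm⟩ := Nat.exists_eq_succ_of_ne_zero hp.1.ne_zero
  have hm1 : p - 1 = m := by omega
  have h1 : ∀ k : ℕ, ((k:ℚ)+1)^p
      = (k:ℚ)^p + (1 + ∑ j ∈ range (p-1), ((p.choose (j+1):ℕ):ℚ) * (k:ℚ)^(j+1)) := by
    intro k
    have expand : ((k:ℚ)+1)^p = ∑ j ∈ range (p+1), (k:ℚ)^j * ((p.choose j : ℕ):ℚ) := by
      rw [add_pow]
      apply Finset.sum_congr rfl
      intro j _
      rw [one_pow]
      ring
    rw [expand, Finset.sum_range_succ' (fun j => (k:ℚ)^j * ((p.choose j : ℕ):ℚ)) p]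
    simp only [pow_zero, one_mul, Nat.choose_zero_right, Nat.cast_one]
    have : ∑ j ∈ range p, (k:ℚ)^(j+1) * ((p.choose (j+1) : ℕ):ℚ)
        = ∑ j ∈ range m, (k:ℚ)^(j+1) * ((p.choose (j+1) : ℕ):ℚ) + (k:ℚ)^p := by
      rw [hm, Finset.sum_range_succ]
      simp [Nat.succ_eq_add_one]
    rw [this, hm1]
    have : ∑ j ∈ range m, (k:ℚ)^(j+1) * ((p.choose (j+1) : ℕ):ℚ)
        = ∑ j ∈ range m, ((p.choose (j+1):ℕ):ℚ) * (k:ℚ)^(j+1) :=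
      Finset.sum_congr rfl fun j _ => mul_comm _ _
    rw [this]
    ring
  have h2 : ∑ k ∈ range p, (((k+1:ℕ):ℚ)^p - ((k:ℕ):ℚ)^p) = ((p:ℕ):ℚ)^p - ((0:ℕ):ℚ)^p :=
    Finset.sum_range_sub (f := fun k => ((k:ℕ):ℚ)^p) p
  have h3 : ∑ k ∈ range p, (((k+1:ℕ):ℚ)^p - ((k:ℕ):ℚ)^p)
      = ∑ k ∈ range p, (1 + ∑ j ∈ range (p-1), ((p.choose (j+1):ℕ):ℚ) * (k:ℚ)^(j+1)) := by
    apply Finset.sum_congr rfl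
    intro k _
    have := h1 k
    push_cast
    push_cast at this
    linarith [this]
  rw [h3] at h2
  rw [Finset.sum_add_distrib, Finset.sum_const, Finset.card_range, nsmul_eq_mul, mul_one,
    Finset.sum_comm] at h2
  have h4 : ((0:ℕ):ℚ)^p = 0 := by
    rw [Nat.cast_zero]
    exact zero_pow hp.1.ne_zero
  rw [h4, sub_zero] at h2
  have h5 : ∑ j ∈ range (p-1), ((p.choose (j+1):ℕ):ℚ) * (∑ k ∈ range p, (k:ℚ)^(j+1))
      = ∑ j ∈ range (p-1), ∑ k ∈ range p, ((p.choose (j+1):ℕ):ℚ) * (k:ℚ)^(j+1) :=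
    Finset.sum_congr rfl fun j _ => Finset.mul_sum _ _ _
  rw [h5]
  push_cast at h2
  linarith [h2]

lemma choose_eq (j : ℕ) : (j+1) * (p.choose (j+1)) = p * ((p-1).choose j) := by
  obtain ⟨m, hm⟩ := Nat.exists_eq_succ_of_ne_zero hp.1.ne_zero
  have hm1 : p - 1 = m := by omega
  have := Nat.add_one_mul_choose_eq m j
  rw [hm1, hm]
  rw [mul_comm]
  exact this.symm

lemma choose_sign (i : ℕ) (hi : i ≤ p - 1) : (((p-1).choose i : ℕ) : ZMod p) = (-1)^i := by
  obtain ⟨m, hm⟩ := Nat.exists_eq_succ_of_ne_zero hp.1.ne_zero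
  have hm1 : p - 1 = m := by omega
  induction i with
  | zero => simp
  | succ i ih =>
    have hpascal : (p-1).choose i + (p-1).choose (i+1) = p.choose (i+1) := by
      rw [hm1, show p = m + 1 from hm]
      exact (Nat.choose_succ_succ' m i).symm
    have hdvd : p ∣ p.choose (i+1) := by
      apply Nat.Prime.dvd_choose_self hp.1 (Nat.succ_ne_zero i)
      omega
    have h0 : ((p.choose (i+1) : ℕ) : ZMod p) = 0 := (ZMod.natCast_eq_zero_iff _ _).2 hdvd
    have hsum : (((p-1).choose i : ℕ) : ZMod p) + (((p-1).choose (i+1) : ℕ) : ZMod p) = 0 := by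
      rw [← Nat.cast_add, hpascal, h0]
    rw [ih (by omega)] at hsum
    rw [pow_succ]
    linear_combination hsum


variable {p : ℕ} [hp : Fact p.Prime]

lemma pow_one_add (c : ℤ) (n : ℕ) : (1+c)^n ≡ 1 + n*c [ZMOD c^2] := by
  induction n with
  | zero => simp
  | succ n ih =>
    have h1 : (1+c)^(n+1) ≡ (1 + n*c) * (1+c) [ZMOD c^2] := by
      rw [pow_succ (1+c)]
      exact ih.mul_right _
    refine h1.trans (Int.modEq_iff_dvd.mpr ⟨-n, by push_cast; ring⟩)

lemma prod_one_add (s : Finset ℕ) (f : ℕ → ℤ) (h : ∀ a ∈ s, (p:ℤ) ∣ f a - 1) :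
    ∏ a ∈ s, f a ≡ 1 + ∑ a ∈ s, (f a - 1) [ZMOD (p:ℤ)^2] := by
  classical
  induction s using Finset.cons_induction with
  | empty => simp
  | cons a s hx ih =>
    rw [Finset.prod_cons, Finset.sum_cons]
    have ih' := ih fun b hb => h b (mem_cons_of_mem hb)
    have h1 : f a * ∏ b ∈ s, f b ≡ f a * (1 + ∑ b ∈ s, (f b - 1)) [ZMOD (p:ℤ)^2] :=
      ih'.mul_left _
    refine h1.trans (Int.modEq_iff_dvd.mpr ?_)
    have ha : (p:ℤ) ∣ f a - 1 := h a (mem_cons_self _ _)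
    have hs : (p:ℤ) ∣ ∑ b ∈ s, (f b - 1) := Finset.dvd_sum fun b hb => h b (mem_cons_of_mem hb)
    obtain ⟨u, hu⟩ := ha
    obtain ⟨v, hv⟩ := hs
    refine ⟨-(u*v), ?_⟩
    have : f a = 1 + (p:ℤ)*u := by omega
    rw [this, hv]
    ring

lemma wilson_dvd : p ∣ (p-1).factorial + 1 := by
  rw [← ZMod.natCast_eq_zero_iff]
  push_cast
  rw [ZMod.wilsons_lemma]
  ring

lemma fermat_int (a : ℕ) (ha : a ∈ Ico 1 p) : (p:ℤ) ∣ (a:ℤ)^(p-1) - 1 := by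
  rw [mem_Ico] at ha
  rw [← ZMod.intCast_zmod_eq_zero_iff_dvd]
  push_cast
  rw [sub_eq_zero]
  apply ZMod.pow_card_sub_one_eq_one
  rw [Ne, ZMod.natCast_eq_zero_iff]
  intro hdvd
  have := Nat.le_of_dvd (by omega) hdvd
  omega

lemma spm1_cong (hodd : Odd p) (W : ℤ) (hW : ((p-1).factorial : ℤ) + 1 = p * W) :
    (p:ℤ)^2 ∣ (∑ k ∈ range p, (k:ℤ)^(p-1)) - ((p:ℤ) - 1 + p * W) := by
  have h2le := hp.1.two_le
  -- sum over range p = sum over Ico 1 p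
  have hsum0 : ∑ k ∈ range p, (k:ℤ)^(p-1) = ∑ a ∈ Ico 1 p, (a:ℤ)^(p-1) := by
    rw [Finset.range_eq_Ico, Finset.sum_eq_sum_Ico_succ_bot (by omega : 0 < p)]
    simp [zero_pow (show p - 1 ≠ 0 by omega)]
  -- factorial as product
  have hfact : ∏ a ∈ Ico 1 p, (a:ℤ) = ((p-1).factorial : ℤ) := by
    have : ∏ a ∈ Ico 1 (p-1+1), (a:ℕ) = (p-1).factorial := Finset.prod_Ico_id_eq_factorial (p-1)
    rw [show p - 1 + 1 = p by omega] at this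
    rw [← this]
    push_cast
    rfl
  have hprodpow : ∏ a ∈ Ico 1 p, (a:ℤ)^(p-1) = (((p-1).factorial : ℤ))^(p-1) := by
    rw [← hfact, ← Finset.prod_pow]
  -- product congruence
  have hprod : ∏ a ∈ Ico 1 p, (a:ℤ)^(p-1)
      ≡ 1 + ∑ a ∈ Ico 1 p, ((a:ℤ)^(p-1) - 1) [ZMOD (p:ℤ)^2] :=
    prod_one_add _ _ fermat_int
  have hsum1 : ∑ a ∈ Ico 1 p, ((a:ℤ)^(p-1) - 1)
      = (∑ a ∈ Ico 1 p, (a:ℤ)^(p-1)) - ((p:ℤ) - 1) := by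
    rw [Finset.sum_sub_distrib, Finset.sum_const, Nat.card_Ico, nsmul_eq_mul, mul_one]
    push_cast [show 1 ≤ p by omega]
    ring
  -- binomial congruence
  have heven : Even (p-1) := Nat.Odd.sub_odd hodd odd_one
  have hfacteq : ((p-1).factorial : ℤ) = -(1 + (-(p:ℤ)*W)) := by linarith [hW]
  have hpow : (((p-1).factorial : ℤ))^(p-1) ≡ 1 + (p:ℤ)*W [ZMOD (p:ℤ)^2] := by
    have h1 : (((p-1).factorial : ℤ))^(p-1) = (1 + (-(p:ℤ)*W))^(p-1) := by
      rw [hfacteq, heven.neg_pow]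
    have h2 : (1 + (-(p:ℤ)*W))^(p-1) ≡ 1 + ((p-1:ℕ):ℤ)*(-(p:ℤ)*W) [ZMOD (-(p:ℤ)*W)^2] :=
      pow_one_add _ _
    have h3 : (1 + (-(p:ℤ)*W))^(p-1) ≡ 1 + ((p-1:ℕ):ℤ)*(-(p:ℤ)*W) [ZMOD (p:ℤ)^2] :=
      Int.ModEq.of_dvd ⟨W^2, by ring⟩ h2
    rw [h1]
    refine h3.trans (Int.modEq_iff_dvd.mpr ?_)
    refine ⟨W, ?_⟩
    push_cast [show (1:ℕ) ≤ p by omega]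
    ring
  -- combine
  have hcomb : 1 + (∑ a ∈ Ico 1 p, ((a:ℤ)^(p-1) - 1)) ≡ 1 + (p:ℤ)*W [ZMOD (p:ℤ)^2] :=
    hprod.symm.trans (by rw [hprodpow]; exact hpow)
  obtain ⟨t, ht⟩ := Int.ModEq.dvd hcomb
  rw [hsum1] at ht
  rw [hsum0]
  exact ⟨-t, by linarith [ht]⟩


lemma T_eq (h3 : 3 ≤ p) :
    ∑ j ∈ range (p-2), (-1:ℚ)^j * bernoulli (j+1) / (j+1)
      = -1 - ∑ n ∈ Icc 1 (p-2), bernoulli n / n := by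
  have hIcc : ∑ n ∈ Icc 1 (p-2), bernoulli n / n
      = ∑ j ∈ range (p-2), bernoulli (j+1) / ((j:ℚ)+1) := by
    rw [← Finset.Ico_add_one_right_eq_Icc, Finset.sum_Ico_eq_sum_range]
    simp only [Nat.add_sub_cancel]
    apply Finset.sum_congr rfl
    intro j _
    rw [add_comm 1 j]
    norm_cast
  rw [hIcc]
  have key : ∑ j ∈ range (p-2), ((-1:ℚ)^j * bernoulli (j+1) / (j+1) + bernoulli (j+1) / ((j:ℚ)+1))
      = -1 := by
    have hterm : ∀ j ∈ range (p-2),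
        (-1:ℚ)^j * bernoulli (j+1) / (j+1) + bernoulli (j+1) / ((j:ℚ)+1)
          = if j = 0 then (-1:ℚ) else 0 := by
      intro j _
      rcases Nat.even_or_odd j with hj | hj
      · rcases Nat.eq_zero_or_pos j with h0 | h0
        · subst h0
          norm_num [bernoulli_one]
        · have hodd' : Odd (j+1) := Even.add_one hj
          have hB : bernoulli (j+1) = 0 := by
            rw [bernoulli_eq_bernoulli'_of_ne_one (by omega)]
            exact bernoulli'_eq_zero_of_odd hodd' (by omega)
          simp [hB, if_neg (by omega : ¬ j = 0)]
      · have hj0 : j ≠ 0 := by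
          intro h
          rw [h] at hj
          exact (Nat.not_odd_iff_even.mpr Even.zero) hj
        rw [Odd.neg_one_pow hj, if_neg hj0]
        ring
    rw [Finset.sum_congr rfl hterm, Finset.sum_ite_eq' (range (p-2)) 0 (fun _ => (-1:ℚ))]
    exact if_pos (Finset.mem_range.mpr (by omega))
  have hdistrib := Finset.sum_add_distrib (s := range (p-2))
    (f := fun j => (-1:ℚ)^j * bernoulli (j+1) / (j+1)) (g := fun j => bernoulli (j+1) / ((j:ℚ)+1))
  rw [hdistrib] at key
  linarith [key]

lemma choose_sign_norm (j : ℕ) (hj : j ≤ p - 1) :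
    ‖(((p-1).choose j : ℕ) : ℚ_[p]) - (-1:ℚ_[p])^j‖ ≤ ((p:ℝ))⁻¹ := by
  have hz : (((((p-1).choose j : ℕ) : ℤ) - (-1)^j : ℤ) : ZMod p) = 0 := by
    push_cast
    rw [choose_sign j hj]
    ring
  rw [ZMod.intCast_zmod_eq_zero_iff_dvd] at hz
  obtain ⟨t, ht⟩ := hz
  have hcast : (((p-1).choose j : ℕ) : ℚ_[p]) - (-1:ℚ_[p])^j
      = (((p:ℤ) * t : ℤ) : ℚ_[p]) := by
    rw [← ht]
    push_cast
    ring
  rw [hcast]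
  push_cast
  rw [norm_mul, Padic.norm_p]
  calc ((p:ℝ))⁻¹ * ‖((t : ℤ) : ℚ_[p])‖ ≤ ((p:ℝ))⁻¹ * 1 :=
        mul_le_mul_of_nonneg_left (Padic.norm_int_le_one t) pinv_nonneg'
    _ = ((p:ℝ))⁻¹ := mul_one _

noncomputable def Sp (p : ℕ) [Fact p.Prime] (m : ℕ) : ℚ_[p] :=
  ∑ k ∈ range p, ((k : ℕ) : ℚ_[p])^m

lemma Sp_def (m : ℕ) : Sp p m = ∑ k ∈ range p, ((k : ℕ) : ℚ_[p])^m := rfl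

lemma Sp_eq (m : ℕ) : ((∑ k ∈ range p, (k:ℚ)^m : ℚ) : ℚ_[p]) = Sp p m := by
  rw [Sp_def, Rat.cast_sum]
  apply Finset.sum_congr rfl
  intro k _
  push_cast
  ring

lemma key_est (hodd : Odd p) (W : ℤ) (hW : ((p-1).factorial : ℤ) + 1 = p * W) :
    ‖((∑ n ∈ Icc 1 (p-2), bernoulli n / n : ℚ) : ℚ_[p]) - ((W : ℤ) : ℚ_[p])‖ ≤ ((p:ℝ))⁻¹ := by
  have h2le := hp.1.two_le
  have h3 : 3 ≤ p := by
    rcases hodd with ⟨k, hk⟩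
    omega
  -- step1 : telescope in ℚ_[p]
  have step1 : (p:ℚ_[p])^p = (p:ℚ_[p])
      + (∑ j ∈ range (p-2), ((p.choose (j+1) : ℕ) : ℚ_[p]) * Sp p (j+1))
      + (p:ℚ_[p]) * Sp p (p-1) := by
    have h := telescope (p := p)
    have hc := congrArg (fun q : ℚ => (q : ℚ_[p])) h
    push_cast at hc
    simp only [← Sp_def] at hc
    rw [show p - 1 = (p-2) + 1 by omega, Finset.sum_range_succ] at hc
    rw [show p - 2 + 1 = p - 1 by omega] at hc
    have hch : p.choose (p-1) = p := by
      rw [Nat.choose_symm (show 1 ≤ p by omega), Nat.choose_one_right]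
    rw [hch] at hc
    rw [hc]
    push_cast
    ring
  set A : ℚ_[p] := ∑ j ∈ range (p-2), ((p.choose (j+1) : ℕ) : ℚ_[p]) * Sp p (j+1) with hA
  set Tc : ℚ_[p] := ∑ j ∈ range (p-2),
    (-1:ℚ_[p])^j * ((bernoulli (j+1) : ℚ) : ℚ_[p]) / ((j:ℚ_[p])+1) with hTc
  set σc : ℚ_[p] := ((∑ n ∈ Icc 1 (p-2), bernoulli n / n : ℚ) : ℚ_[p]) with hσc
  set Wc : ℚ_[p] := ((W : ℤ) : ℚ_[p]) with hWc
  -- step2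
  have step2 : ‖A - (p:ℚ_[p])^2 * Tc‖ ≤ ((p:ℝ)⁻¹)^3 := by
    have hYT : A - (p:ℚ_[p])^2 * Tc
        = ∑ j ∈ range (p-2), (((p.choose (j+1) : ℕ) : ℚ_[p]) * Sp p (j+1)
            - (p:ℚ_[p])^2 * ((-1:ℚ_[p])^j * ((bernoulli (j+1) : ℚ) : ℚ_[p]) / ((j:ℚ_[p])+1))) := by
      rw [hA, hTc, Finset.mul_sum, ← Finset.sum_sub_distrib]
    rw [hYT]
    apply norm_sum_le_of_forall _ _ (by positivity)
    intro j hj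
    have hjlt : j < p - 2 := Finset.mem_range.mp hj
    have hj1 : j + 1 ≤ p - 2 := by omega
    have hne : ((j:ℚ_[p])+1) ≠ 0 := Nat.cast_add_one_ne_zero j
    have hch : ((j:ℚ_[p])+1) * ((p.choose (j+1) : ℕ) : ℚ_[p])
        = (p:ℚ_[p]) * (((p-1).choose j : ℕ) : ℚ_[p]) := by
      exact_mod_cast congrArg (fun n : ℕ => (n : ℚ_[p])) (choose_eq (p := p) j)
    have e1 : ((p.choose (j+1) : ℕ) : ℚ_[p])
        = ((j:ℚ_[p])+1)⁻¹ * ((p:ℚ_[p]) * (((p-1).choose j : ℕ) : ℚ_[p])) := by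
      field_simp
      linear_combination hch
    have hexp : ((p.choose (j+1) : ℕ) : ℚ_[p]) * Sp p (j+1)
        - (p:ℚ_[p])^2 * ((-1:ℚ_[p])^j * ((bernoulli (j+1) : ℚ) : ℚ_[p]) / ((j:ℚ_[p])+1))
        = ((j:ℚ_[p])+1)⁻¹ * ((p:ℚ_[p]) *
            ((((p-1).choose j : ℕ) : ℚ_[p]) * (Sp p (j+1) - (p:ℚ_[p]) * ((bernoulli (j+1) : ℚ) : ℚ_[p]))
              + ((((p-1).choose j : ℕ) : ℚ_[p]) - (-1:ℚ_[p])^j)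
                * ((p:ℚ_[p]) * ((bernoulli (j+1) : ℚ) : ℚ_[p])))) := by
      rw [e1, div_eq_mul_inv]
      ring
    rw [hexp, norm_mul, norm_inv, norm_mul, Padic.norm_p]
    have hnorm1 : ‖(j:ℚ_[p])+1‖ = 1 := by
      have : ((j:ℚ_[p])+1) = ((j+1 : ℕ) : ℚ_[p]) := by push_cast; ring
      rw [this]
      exact norm_nat_lt (j+1) (by omega) (by omega)
    rw [hnorm1, inv_one, one_mul]
    have hf := faulhaber_err (p := p) (j+1) (by omega) hj1
    rw [Sp_eq] at hf
    have hb1 : ‖(((p-1).choose j : ℕ) : ℚ_[p])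
        * (Sp p (j+1) - (p:ℚ_[p]) * ((bernoulli (j+1) : ℚ) : ℚ_[p]))‖ ≤ ((p:ℝ)⁻¹)^2 := by
      rw [norm_mul]
      calc _ ≤ 1 * ((p:ℝ)⁻¹)^2 :=
            mul_le_mul (norm_nat_le_one _) hf (norm_nonneg _) (by norm_num)
        _ = ((p:ℝ)⁻¹)^2 := one_mul _
    have hb2 : ‖((((p-1).choose j : ℕ) : ℚ_[p]) - (-1:ℚ_[p])^j)
        * ((p:ℚ_[p]) * ((bernoulli (j+1) : ℚ) : ℚ_[p]))‖ ≤ ((p:ℝ)⁻¹)^2 := by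
      rw [norm_mul, norm_mul, Padic.norm_p]
      have hBle : ‖((bernoulli (j+1) : ℚ) : ℚ_[p])‖ ≤ 1 := norm_bernoulli_le (j+1) hj1
      have hcs := choose_sign_norm (p := p) j (by omega)
      calc ‖(((p-1).choose j : ℕ) : ℚ_[p]) - (-1:ℚ_[p])^j‖
            * ((p:ℝ)⁻¹ * ‖((bernoulli (j+1) : ℚ) : ℚ_[p])‖)
          ≤ ((p:ℝ))⁻¹ * ((p:ℝ)⁻¹ * 1) := by
            apply mul_le_mul hcs _ (by positivity) pinv_nonneg'
            exact mul_le_mul_of_nonneg_left hBle pinv_nonneg'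
        _ = ((p:ℝ)⁻¹)^2 := by ring
    calc ((p:ℝ))⁻¹ * ‖_ + _‖
        ≤ ((p:ℝ))⁻¹ * ((p:ℝ)⁻¹)^2 := by
          apply mul_le_mul_of_nonneg_left _ pinv_nonneg'
          exact le_trans (Padic.nonarchimedean _ _) (max_le hb1 hb2)
      _ = ((p:ℝ)⁻¹)^3 := by ring
  -- step3
  have step3 : ‖Sp p (p-1) - ((p:ℚ_[p]) - 1 + (p:ℚ_[p]) * Wc)‖ ≤ ((p:ℝ)⁻¹)^2 := by
    obtain ⟨tt, htt⟩ := spm1_cong (p := p) hodd W hW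
    have hc := congrArg (fun z : ℤ => (z : ℚ_[p])) htt
    push_cast at hc
    simp only [← Sp_def] at hc
    have heq : Sp p (p-1) - ((p:ℚ_[p]) - 1 + (p:ℚ_[p]) * Wc) = (p:ℚ_[p])^2 * ((tt : ℤ) : ℚ_[p]) := by
      rw [hWc]
      linear_combination hc
    rw [heq, norm_mul, norm_pow, Padic.norm_p]
    calc ((p:ℝ)⁻¹)^2 * ‖((tt : ℤ) : ℚ_[p])‖ ≤ ((p:ℝ)⁻¹)^2 * 1 :=
          mul_le_mul_of_nonneg_left (Padic.norm_int_le_one tt) (by positivity)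
      _ = ((p:ℝ)⁻¹)^2 := mul_one _
  -- step4
  have step4 : Tc = -1 - σc := by
    have h := T_eq (p := p) h3
    have hc := congrArg (fun q : ℚ => (q : ℚ_[p])) h
    push_cast at hc
    rw [hTc, hσc]
    push_cast
    convert hc using 2
  -- main identity
  have hid : (p:ℚ_[p])^2 * (σc - Wc)
      = (A - (p:ℚ_[p])^2 * Tc)
        + (p:ℚ_[p]) * (Sp p (p-1) - ((p:ℚ_[p]) - 1 + (p:ℚ_[p]) * Wc))
        - (p:ℚ_[p])^p := by
    linear_combination step1 + (p:ℚ_[p])^2 * step4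
  have hppow : ‖(p:ℚ_[p])^p‖ ≤ ((p:ℝ)⁻¹)^3 := by
    rw [norm_pow, Padic.norm_p]
    exact pow_le_pow_of_le_one pinv_nonneg' pinv_le_one h3
  have hrhs : ‖(p:ℚ_[p])^2 * (σc - Wc)‖ ≤ ((p:ℝ)⁻¹)^3 := by
    rw [hid, sub_eq_add_neg]
    refine le_trans (Padic.nonarchimedean _ _)
      (max_le (le_trans (Padic.nonarchimedean _ _) (max_le step2 ?_)) ?_)
    · rw [norm_mul, Padic.norm_p]
      calc ((p:ℝ))⁻¹ * ‖Sp p (p-1) - ((p:ℚ_[p]) - 1 + (p:ℚ_[p]) * Wc)‖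
          ≤ ((p:ℝ))⁻¹ * ((p:ℝ)⁻¹)^2 := mul_le_mul_of_nonneg_left step3 pinv_nonneg'
        _ = ((p:ℝ)⁻¹)^3 := by ring
    · rw [norm_neg]
      exact hppow
  rw [norm_mul, norm_pow, Padic.norm_p] at hrhs
  have h1 : ((p:ℝ)⁻¹)^2 * ‖σc - Wc‖ ≤ ((p:ℝ)⁻¹)^2 * ((p:ℝ))⁻¹ := by
    calc ((p:ℝ)⁻¹)^2 * ‖σc - Wc‖ ≤ ((p:ℝ)⁻¹)^3 := hrhs
      _ = ((p:ℝ)⁻¹)^2 * ((p:ℝ))⁻¹ := by ring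
  have hppos : (0:ℝ) < (p:ℝ) := by exact_mod_cast hp.1.pos
  exact le_of_mul_le_mul_left h1 (by positivity)

end SDB

/-- For an odd prime `p`, `∑_{n=1}^{p-2} Bₙ/n ≡ w_p (mod p)`. -/
theorem sum_divided_bernoulli_congr_wilson (p : ℕ) [Fact p.Prime] (hodd : Odd p) :
    ((∑ n ∈ Finset.Icc 1 (p - 2), bernoulli n / n : ℚ) : ZMod p)
      = (((Nat.factorial (p - 1) + 1 : ℚ) / p : ℚ) : ZMod p) := by
  have hp : Fact p.Prime := inferInstance
  have h2le := hp.1.two_le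
  have h3 : 3 ≤ p := by
    rcases hodd with ⟨k, hk⟩
    omega
  obtain ⟨Wn, hWn⟩ := SDB.wilson_dvd (p := p)
  have hW : ((p-1).factorial : ℤ) + 1 = p * (Wn : ℤ) := by exact_mod_cast hWn
  have hrhs : ((Nat.factorial (p - 1) + 1 : ℚ) / p : ℚ) = (((Wn : ℤ)) : ℚ) := by
    rw [div_eq_iff (show (p:ℚ) ≠ 0 by positivity)]
    exact_mod_cast (by linarith [hW] : ((p-1).factorial : ℤ) + 1 = (Wn : ℤ) * p)
  rw [hrhs]
  have hkey := SDB.key_est (p := p) hodd (Wn : ℤ) hW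
  have hσ1 : ‖((∑ n ∈ Finset.Icc 1 (p - 2), bernoulli n / n : ℚ) : ℚ_[p])‖ ≤ 1 := by
    rw [Rat.cast_sum]
    apply SDB.norm_sum_le_of_forall _ _ zero_le_one
    intro n hn
    rw [Finset.mem_Icc] at hn
    have hcast : ((bernoulli n / n : ℚ) : ℚ_[p])
        = ((bernoulli n : ℚ) : ℚ_[p]) / ((n : ℕ) : ℚ_[p]) := by push_cast; ring
    rw [hcast, norm_div, SDB.norm_nat_lt n (by omega) (by omega), div_one]
    exact SDB.norm_bernoulli_le n hn.2
  have hw1 : ‖((((Wn : ℤ)) : ℚ) : ℚ_[p])‖ ≤ 1 := by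
    rw [Rat.cast_intCast]
    exact Padic.norm_int_le_one _
  apply SDB.cast_eq_of_norm_sub_lt hσ1 hw1
  have hcast2 : ((((Wn : ℤ)) : ℚ) : ℚ_[p]) = (((Wn : ℤ)) : ℚ_[p]) := Rat.cast_intCast _
  rw [hcast2]
  calc ‖((∑ n ∈ Finset.Icc 1 (p - 2), bernoulli n / n : ℚ) : ℚ_[p]) - (((Wn : ℤ)) : ℚ_[p])‖
      ≤ ((p:ℝ))⁻¹ := hkey
    _ < 1 := by
      rw [inv_lt_one_iff₀]
      right
      exact_mod_cast hp.1.one_lt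
end

section
/- Let p be a prime and g(X) ∈ F_p[[X]] a power series with constant term 1. If g'(0) ≠ 0 then £_0(g(X)) ≡ X^(p-1) - 1 (mod X^p), and if g'(0) = 0 then £_0(g(X)) ≡ -1 (mod X^(2p-2)), where £_0(X) = sum over k from 1 to p-1 of X^k. -/
open PowerSeries

/-- For a prime `p` and `g ∈ F_p[[X]]` with constant term `1`: if `g'(0) ≠ 0` then
`£₀(g(X)) ≡ X^(p-1) - 1 (mod X^p)`, and if `g'(0) = 0` then `£₀(g(X)) ≡ -1 (mod X^(2p-2))`,
where `£₀(X) = ∑_{k=1}^{p-1} X^k`. -/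
theorem pound_zero_of_powerseries (p : ℕ) [Fact p.Prime] (g : PowerSeries (ZMod p))
    (hg : PowerSeries.constantCoeff (R := ZMod p) g = 1) :
    (PowerSeries.coeff (R := ZMod p) 1 g ≠ 0 →
      ∀ i < p, PowerSeries.coeff (R := ZMod p) i (∑ k ∈ Finset.Icc 1 (p - 1), g ^ k)
        = PowerSeries.coeff (R := ZMod p) i ((PowerSeries.X : PowerSeries (ZMod p)) ^ (p - 1) - 1)) ∧
    (PowerSeries.coeff (R := ZMod p) 1 g = 0 →
      ∀ i < 2 * p - 2, PowerSeries.coeff (R := ZMod p) i (∑ k ∈ Finset.Icc 1 (p - 1), g ^ k)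
        = PowerSeries.coeff (R := ZMod p) i (-1 : PowerSeries (ZMod p))) := by
  have hp : p.Prime := Fact.out
  have hp1 : 1 ≤ p := hp.one_lt.le
  haveI : CharP (PowerSeries (ZMod p)) p :=
    charP_of_injective_ringHom (PowerSeries.C_injective) p
  set h : PowerSeries (ZMod p) := g - 1 with hh
  have hrange : Finset.range p = insert 0 (Finset.Icc 1 (p - 1)) := by
    ext x; simp [Finset.mem_range, Finset.mem_Icc]; omega
  have hT : (∑ k ∈ Finset.Icc 1 (p - 1), g ^ k)
      = (∑ k ∈ Finset.range p, g ^ k) - 1 := by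
    rw [hrange, Finset.sum_insert (by simp), pow_zero]; ring
  have hkey : (∑ k ∈ Finset.range p, g ^ k) * h = h ^ p := by
    rw [hh, geom_sum_mul, sub_pow_char, one_pow]
  have hS' : h ≠ 0 → (∑ k ∈ Finset.range p, g ^ k) = h ^ (p - 1) := by
    intro hne
    have e : (∑ k ∈ Finset.range p, g ^ k) * h = h ^ (p - 1) * h := by
      rw [hkey, ← pow_succ]; congr 1; omega
    exact mul_right_cancel₀ hne e
  have hc0 : PowerSeries.constantCoeff (R := ZMod p) h = 0 := by
    simp [hh, hg]
  have hc1 : PowerSeries.coeff (R := ZMod p) 1 h = PowerSeries.coeff (R := ZMod p) 1 g := by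
    simp [hh, PowerSeries.coeff_one]
  constructor
  · intro hc i hi
    have hne : h ≠ 0 := fun h0 => hc (by rw [← hc1, h0, map_zero])
    obtain ⟨u, hu⟩ : (PowerSeries.X : PowerSeries (ZMod p)) ∣ h :=
      PowerSeries.X_dvd_iff.mpr hc0
    have hu0 : PowerSeries.coeff (R := ZMod p) 0 u = PowerSeries.coeff (R := ZMod p) 1 g := by
      rw [← hc1, hu]
      simp [PowerSeries.coeff_succ_X_mul 0 u]
    have hSeq : (∑ k ∈ Finset.range p, g ^ k)
        = PowerSeries.X ^ (p - 1) * u ^ (p - 1) := by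
      rw [hS' hne, hu, mul_pow]
    rw [hT, map_sub, map_sub, hSeq]
    congr 1
    rcases lt_trichotomy i (p - 1) with hlt | heq | hgt
    · rw [PowerSeries.coeff_X_pow_mul', PowerSeries.coeff_X_pow]
      simp [Nat.not_le.mpr hlt, hlt.ne]
    · subst heq
      rw [PowerSeries.coeff_X_pow_mul', PowerSeries.coeff_X_pow]
      simp only [le_refl, if_true, Nat.sub_self]
      rw [PowerSeries.coeff_zero_eq_constantCoeff, map_pow,
        ← PowerSeries.coeff_zero_eq_constantCoeff, hu0,
        ZMod.pow_card_sub_one_eq_one hc]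
    · omega
  · intro hc i hi
    by_cases hne : h = 0
    · have hg1 : g = 1 := by rwa [sub_eq_zero] at hne
      rw [hT, hg1]
      simp [CharP.cast_eq_zero (PowerSeries (ZMod p)) p]
    · have hdvd : (PowerSeries.X : PowerSeries (ZMod p)) ^ 2 ∣ h := by
        rw [PowerSeries.X_pow_dvd_iff]
        intro m hm
        interval_cases m
        · simpa using hc0
        · rw [hc1]; exact hc
      obtain ⟨v, hv⟩ := hdvd
      have hSeq : (∑ k ∈ Finset.range p, g ^ k)
          = PowerSeries.X ^ (2 * p - 2) * v ^ (p - 1) := by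
        rw [hS' hne, hv, mul_pow, ← pow_mul]
        congr 2; omega
      rw [hT, map_sub, hSeq, PowerSeries.coeff_X_pow_mul']
      rw [if_neg (by omega)]
      simp [PowerSeries.coeff_one]
end

section
/- Let p be an odd prime. Then £_1 evaluated at 1/2 in F_p, i.e., sum over k from 1 to p-1 of 2^(-k)/k mod p, equals the Fermat quotient q_p(2) = (2^(p-1)-1)/p modulo p. -/
lemma cast_choose_sub_one (p : ℕ) [hp : Fact p.Prime] :
    ∀ j, j ≤ p - 1 → (((p - 1).choose j : ℕ) : ZMod p) = (-1) ^ j := by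
  intro j
  induction j with
  | zero => simp
  | succ j ih =>
    intro hj
    have hp1 : 1 ≤ p := hp.out.pos
    have hpas : (p - 1).choose j + (p - 1).choose (j + 1) = p.choose (j + 1) := by
      have h := (Nat.choose_succ_succ (p - 1) j).symm
      have hq : p - 1 + 1 = p := by omega
      simpa only [Nat.succ_eq_add_one, hq] using h
    have h0 : ((p.choose (j + 1) : ℕ) : ZMod p) = 0 := by
      rw [ZMod.natCast_eq_zero_iff]
      exact hp.out.dvd_choose_self (by omega) (by omega)
    have hsum : (((p - 1).choose j : ℕ) : ZMod p) + (((p - 1).choose (j + 1) : ℕ) : ZMod p) = 0 := by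
      rw [← Nat.cast_add, hpas, h0]
    rw [ih (by omega)] at hsum
    have h1 : (((p - 1).choose (j + 1) : ℕ) : ZMod p) = -(-1) ^ j := by linear_combination hsum
    rw [h1, pow_succ]
    ring

/-- For an odd prime `p`, `£₁(1/2) = ∑_{k=1}^{p-1} 2^(-k)/k ≡ q_p(2) (mod p)`,
where `q_p(2) = (2^(p-1) - 1)/p` is the Fermat quotient of `2`. -/
theorem truncated_log_at_half (p : ℕ) [Fact p.Prime] (hodd : Odd p) :
    ∑ k ∈ Finset.Icc 1 (p - 1), ((2 : ZMod p) ^ k)⁻¹ * (k : ZMod p)⁻¹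
      = (((2 ^ (p - 1) - 1 : ℚ) / p : ℚ) : ZMod p) := by
  have hp := (Fact.out : p.Prime)
  have hp2 : p ≠ 2 := by
    rintro rfl
    exact (by decide : ¬ Odd 2) hodd
  have hp3 : 3 ≤ p := by
    have := hp.two_le; omega
  have h2 : (2 : ZMod p) ≠ 0 := by
    have h : ((2 : ℕ) : ZMod p) ≠ 0 := by
      rw [Ne, ZMod.natCast_eq_zero_iff]
      intro h
      exact hp2 ((Nat.prime_dvd_prime_iff_eq hp Nat.prime_two).mp h)
    simpa using h
  have hfermat : (2 : ZMod p) ^ (p - 1) = 1 := ZMod.pow_card_sub_one_eq_one h2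
  -- the Fermat quotient as an integer
  set c : ℕ → ℕ := fun k => p.choose k / p with hc
  have hcp : ∀ k, k ∈ Finset.Icc 1 (p - 1) → p * c k = p.choose k := by
    intro k hk
    simp only [Finset.mem_Icc] at hk
    exact Nat.mul_div_cancel' (hp.dvd_choose_self (by omega) (by omega))
  -- the binomial identity
  have hbin : (1 : ℤ) = ∑ k ∈ Finset.range (p + 1),
      (-1) ^ k * 2 ^ (p - k) * (p.choose k : ℤ) := by
    have h := add_pow (-1 : ℤ) 2 p
    norm_num at h
    convert h using 2
  have hsplit : Finset.range (p + 1) = insert 0 (insert p (Finset.Icc 1 (p - 1))) := by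
    ext x
    simp only [Finset.mem_range, Finset.mem_insert, Finset.mem_Icc]
    omega
  set T : ℤ := ∑ k ∈ Finset.Icc 1 (p - 1), (-1) ^ k * 2 ^ (p - 1 - k) * (c k : ℤ) with hT
  have hkey : (p : ℤ) * (2 * T) = 2 - 2 ^ p := by
    rw [hsplit] at hbin
    rw [Finset.sum_insert (by simp [Finset.mem_Icc]; omega),
        Finset.sum_insert (by simp [Finset.mem_Icc]; omega)] at hbin
    have hpp : ((-1 : ℤ)) ^ p = -1 := Odd.neg_one_pow hodd
    simp only [pow_zero, one_mul, Nat.sub_self, Nat.sub_zero, Nat.choose_self, Nat.cast_one,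
      mul_one, Nat.choose_zero_right, hpp] at hbin
    have hS : ∑ k ∈ Finset.Icc 1 (p - 1), (-1 : ℤ) ^ k * 2 ^ (p - k) * (p.choose k : ℤ)
        = (p : ℤ) * (2 * T) := by
      rw [hT, Finset.mul_sum, Finset.mul_sum]
      apply Finset.sum_congr rfl
      intro k hk
      have hmem := hk
      simp only [Finset.mem_Icc] at hmem
      have h1 : p.choose k = p * c k := (hcp k hk).symm
      have h2' : (2 : ℤ) ^ (p - k) = 2 * 2 ^ (p - 1 - k) := by
        rw [← pow_succ']
        congr 1
        omega
      rw [h1, h2']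
      push_cast
      ring
    rw [hS] at hbin
    linarith
  have hkeyT : (T : ℤ) * (p : ℤ) = 1 - 2 ^ (p - 1) := by
    have h2p : (2 : ℤ) ^ p = 2 * 2 ^ (p - 1) := by
      rw [← pow_succ']
      congr 1
      omega
    rw [h2p] at hkey
    nlinarith [hkey]
  -- rewrite the RHS as the cast of the integer -T
  have hrhs : (((2 ^ (p - 1) - 1 : ℚ) / p : ℚ) : ZMod p) = ((-T : ℤ) : ZMod p) := by
    have hq : ((2 ^ (p - 1) - 1 : ℚ) / p : ℚ) = ((-T : ℤ) : ℚ) := by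
      have hpne : (p : ℚ) ≠ 0 := by positivity
      rw [div_eq_iff hpne]
      have hq2 : ((T : ℚ)) * (p : ℚ) = 1 - 2 ^ (p - 1) := by exact_mod_cast hkeyT
      push_cast
      linarith
    rw [hq, Rat.cast_intCast]
  rw [hrhs, Int.cast_neg, hT]
  push_cast
  rw [← Finset.sum_neg_distrib]
  refine Finset.sum_congr rfl ?_
  intro k hk
  have hmem := Finset.mem_Icc.mp hk
  have hknez : ((k : ℕ) : ZMod p) ≠ 0 := by
    rw [Ne, ZMod.natCast_eq_zero_iff]
    intro h
    have := Nat.le_of_dvd (by omega) h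
    omega
  have hck : ((c k : ℕ) : ZMod p) * (k : ZMod p) = (-1) ^ (k - 1) := by
    have h1 : (p - 1).choose (k - 1) = c k * k := by
      have h2' : p * (p - 1).choose (k - 1) = p.choose k * k := by
        have h3 := Nat.add_one_mul_choose_eq (p - 1) (k - 1)
        have hq : p - 1 + 1 = p := by omega
        have hq2 : k - 1 + 1 = k := by omega
        simpa only [Nat.succ_eq_add_one, hq, hq2] using h3
      have h4 : p * (p - 1).choose (k - 1) = p * (c k * k) := by
        rw [h2', ← hcp k hk]; ring
      exact Nat.eq_of_mul_eq_mul_left hp.pos h4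
    have h5 : (((p - 1).choose (k - 1) : ℕ) : ZMod p) = (-1) ^ (k - 1) :=
      cast_choose_sub_one p (k - 1) (by omega)
    rw [h1] at h5
    push_cast at h5
    rw [← h5]
  have h2k : (2 : ZMod p) ^ (p - 1 - k) = ((2 : ZMod p) ^ k)⁻¹ := by
    apply eq_inv_of_mul_eq_one_left
    rw [← pow_add, show p - 1 - k + k = p - 1 by omega]
    exact hfermat
  have hneg : ((-1 : ZMod p)) ^ k = -(-1) ^ (k - 1) := by
    conv_lhs => rw [show k = (k - 1) + 1 by omega]
    rw [pow_succ]; ring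
  have hckv : ((c k : ℕ) : ZMod p) = (-1) ^ (k - 1) * ((k : ZMod p))⁻¹ := by
    rw [← hck, mul_assoc, mul_inv_cancel₀ hknez, mul_one]
  have hsq : ((-1 : ZMod p)) ^ (k - 1) * (-1) ^ (k - 1) = 1 := by
    rw [← pow_add, ← two_mul, pow_mul]; norm_num
  rw [hneg, hckv, h2k]
  linear_combination (-(((2 : ZMod p) ^ k)⁻¹ * ((k : ZMod p))⁻¹)) * hsq
end

section
/- Let p be an odd prime. Then Wolstenholme's theorem binomial(2p-1, p-1) ≡ 1 (mod p^3) for p > 3 is equivalent, via the expression u_{2p} = (1 + binomial(2p-1,p-1)(2(p-1)! + (p-1)!^2))/(2p)!, to the congruence u_{2p} ≡ u_p^2/2 (mod p), where u_p = 1/p! + 1/p = w_p/(p-1)!. In particular, for p > 3, (1 + binomial(2p-1,p-1)(2(p-1)! + (p-1)!^2))/(2p)! ≡ w_p^2/2 (mod p) as p-integral rationals. -/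
lemma WAH.ratCast_eq_div (p : ℕ) [Fact p.Prime] (a b : ℤ) (r : ℚ)
    (hb : ((b : ℤ) : ZMod p) ≠ 0) (h1 : r * (b : ℚ) = (a : ℚ)) :
    (r : ZMod p) = (a : ZMod p) / (b : ZMod p) := by
  have hb0 : b ≠ 0 := by rintro rfl; simp at hb
  have hdenQ : (r.den : ℚ) ≠ 0 := by exact_mod_cast r.den_nz
  have h2 : r * (r.den : ℚ) = (r.num : ℚ) := Rat.mul_den_eq_num r
  have hcross : r.num * b = a * (r.den : ℤ) := by
    have : ((r.num * b : ℤ) : ℚ) = ((a * (r.den : ℤ) : ℤ) : ℚ) := by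
      push_cast
      linear_combination (r.den : ℚ) * h1 - (b : ℚ) * h2
    exact_mod_cast this
  have hdendvd : (r.den : ℤ) ∣ b := by
    have hcop : (r.num.natAbs).Coprime r.den := r.reduced
    have hh2 : (r.den : ℤ) ∣ r.num * b := ⟨a, by linarith [hcross]⟩
    have h3 : r.den ∣ r.num.natAbs * b.natAbs := by
      have := Int.natAbs_dvd_natAbs.mpr hh2
      rwa [Int.natAbs_mul] at this
    have h4 : r.den ∣ b.natAbs := (Nat.Coprime.dvd_of_dvd_mul_left hcop.symm h3)
    exact (Int.natCast_dvd_natCast.mpr h4).trans (Int.natAbs_dvd.mpr dvd_rfl)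
  have hden : ((r.den : ℕ) : ZMod p) ≠ 0 := by
    intro h
    apply hb
    rw [ZMod.natCast_eq_zero_iff] at h
    rw [ZMod.intCast_zmod_eq_zero_iff_dvd]
    exact (Int.natCast_dvd_natCast.mpr h).trans hdendvd
  have hcast : (r : ZMod p) = (r.num : ZMod p) / ((r.den : ℕ) : ZMod p) :=
    Rat.cast_def r
  have hc : ((r.num * b : ℤ) : ZMod p) = ((a * (r.den : ℤ) : ℤ) : ZMod p) :=
    congrArg (Int.cast : ℤ → ZMod p) hcross
  push_cast at hc
  rw [hcast]
  field_simp
  linear_combination hc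

lemma WAH.choose_pred (p : ℕ) [hp : Fact p.Prime] : ∀ j : ℕ, j < p →
    ((Nat.choose (p - 1) j : ℕ) : ZMod p) = (-1 : ZMod p) ^ j := by
  intro j
  induction j with
  | zero => simp
  | succ j ih =>
    intro hj
    have hj' : j < p := Nat.lt_of_succ_lt hj
    have hp1 : p - 1 + 1 = p := Nat.succ_pred_eq_of_pos hp.out.pos
    have hpascal : Nat.choose p (j + 1)
        = Nat.choose (p - 1) j + Nat.choose (p - 1) (j + 1) := by
      conv_lhs => rw [← hp1]
      exact Nat.choose_succ_succ (p - 1) j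
    have hdvd : p ∣ Nat.choose p (j + 1) :=
      hp.out.dvd_choose_self (Nat.succ_ne_zero j) hj
    have h0 : ((Nat.choose p (j + 1) : ℕ) : ZMod p) = 0 :=
      (ZMod.natCast_eq_zero_iff _ _).mpr hdvd
    rw [hpascal] at h0
    push_cast at h0
    rw [ih hj'] at h0
    rw [pow_succ]
    linear_combination h0

lemma WAH.wolstenholme (p : ℕ) [hp : Fact p.Prime] (hp3 : 3 < p) :
    (p : ℤ) ^ 3 ∣ (Nat.choose (2 * p - 1) (p - 1) : ℤ) - 1 := by
  have hppos : 0 < p := hp.out.pos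
  -- C(2p,p) as a sum of squares
  have h1 : Nat.choose (2 * p) p = ∑ k ∈ Finset.range (p + 1), p.choose k ^ 2 := by
    rw [two_mul, Nat.add_choose_eq, Finset.Nat.sum_antidiagonal_eq_sum_range_succ_mk]
    refine Finset.sum_congr rfl fun k hk => ?_
    have hk' : k ≤ p := Nat.lt_succ_iff.mp (Finset.mem_range.mp hk)
    rw [Nat.choose_symm hk', sq]
  -- split off k = 0 and k = p
  have h2 : (Nat.choose (2 * p) p : ℤ) - 2
      = ∑ k ∈ Finset.Ico 1 p, (p.choose k : ℤ) ^ 2 := by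
    rw [h1]
    push_cast
    rw [Finset.sum_range_succ, Finset.range_eq_Ico,
      Finset.sum_eq_sum_Ico_succ_bot hppos]
    simp
    ring
  set m : ℕ → ℕ := fun k => p.choose k / p with hm
  have hmk : ∀ k ∈ Finset.Ico 1 p, p.choose k = p * m k := by
    intro k hk
    obtain ⟨hk1, hk2⟩ := Finset.mem_Ico.mp hk
    exact (Nat.mul_div_cancel' (hp.out.dvd_choose_self (by omega) hk2)).symm
  have h3 : (Nat.choose (2 * p) p : ℤ) - 2
      = (p : ℤ) ^ 2 * ∑ k ∈ Finset.Ico 1 p, (m k : ℤ) ^ 2 := by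
    rw [h2, Finset.mul_sum]
    refine Finset.sum_congr rfl fun k hk => ?_
    rw [hmk k hk]
    push_cast
    ring
  -- k * m k = C(p-1, k-1)
  have hkm : ∀ k ∈ Finset.Ico 1 p, k * m k = Nat.choose (p - 1) (k - 1) := by
    intro k hk
    obtain ⟨hk1, hk2⟩ := Finset.mem_Ico.mp hk
    obtain ⟨j, rfl⟩ : ∃ j, k = j + 1 := ⟨k - 1, by omega⟩
    have hid := Nat.add_one_mul_choose_eq (p - 1) j
    rw [show p - 1 + 1 = p by omega] at hid
    rw [hmk (j + 1) hk] at hid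
    -- hid : p * choose (p-1) j = p * m (j+1) * (j+1)
    simp only [Nat.add_sub_cancel]
    apply Nat.eq_of_mul_eq_mul_left hppos
    rw [hid]; ring
  -- the inner sum is divisible by p
  have h4 : ((∑ k ∈ Finset.Ico 1 p, (m k) ^ 2 : ℕ) : ZMod p) = 0 := by
    push_cast
    have hterm : ∀ k ∈ Finset.Ico 1 p,
        ((m k : ZMod p)) ^ 2 = (((k : ZMod p))⁻¹) ^ 2 := by
      intro k hk
      obtain ⟨hk1, hk2⟩ := Finset.mem_Ico.mp hk
      have hk0 : ((k : ℕ) : ZMod p) ≠ 0 := by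
        rw [Ne, ZMod.natCast_eq_zero_iff]
        intro h
        exact absurd (Nat.le_of_dvd (by omega) h) (by omega)
      have hcast : ((k : ZMod p)) * (m k : ZMod p) = (-1 : ZMod p) ^ (k - 1) := by
        have := congrArg (fun n : ℕ => (n : ZMod p)) (hkm k hk)
        push_cast at this
        rw [this]
        exact WAH.choose_pred p (k - 1) (by omega)
      have hsq : ((k : ZMod p)) ^ 2 * (m k : ZMod p) ^ 2 = 1 := by
        have := congrArg (fun x => x ^ 2) hcast
        rw [mul_pow] at this
        rw [this, ← pow_mul, mul_comm (k-1) 2, pow_mul, neg_one_sq, one_pow]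
      field_simp
      rw [← hsq]
      ring
    rw [Finset.sum_congr rfl hterm]
    -- extend to range p
    have h5 : ∑ k ∈ Finset.Ico 1 p, (((k : ZMod p))⁻¹) ^ 2
        = ∑ k ∈ Finset.range p, (((k : ZMod p))⁻¹) ^ 2 := by
      rw [Finset.range_eq_Ico, Finset.sum_eq_sum_Ico_succ_bot hppos]
      simp
    rw [h5]
    -- reindex over ZMod p
    have h6 : ∑ k ∈ Finset.range p, (((k : ZMod p))⁻¹) ^ 2
        = ∑ x : ZMod p, (x⁻¹) ^ 2 := by
      haveI : NeZero p := ⟨by omega⟩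
      refine Finset.sum_nbij' (fun k => (k : ZMod p)) (fun x => x.val)
        (fun a _ => Finset.mem_univ _)
        (fun x _ => Finset.mem_range.mpr (ZMod.val_lt x))
        (fun a ha => ZMod.val_cast_of_lt (Finset.mem_range.mp ha))
        (fun x _ => ZMod.natCast_rightInverse x)
        (fun a _ => rfl)
    rw [h6]
    have h7 : ∑ x : ZMod p, (x⁻¹ : ZMod p) ^ 2 = ∑ x : ZMod p, x ^ 2 :=
      Fintype.sum_bijective (fun x : ZMod p => x⁻¹) inv_involutive.bijective _ _
        (fun x => rfl)
    rw [h7]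
    have := FiniteField.sum_pow_lt_card_sub_one (ZMod p) 2
      (by rw [ZMod.card]; omega)
    exact this
  rw [ZMod.natCast_eq_zero_iff] at h4
  obtain ⟨t, ht⟩ := h4
  have h8 : (p : ℤ) ^ 3 ∣ (Nat.choose (2 * p) p : ℤ) - 2 := by
    rw [h3]
    refine ⟨(t : ℤ), ?_⟩
    have : ((∑ k ∈ Finset.Ico 1 p, (m k) ^ 2 : ℕ) : ℤ) = ((p * t : ℕ) : ℤ) :=
      congrArg (fun n : ℕ => (n : ℤ)) ht
    push_cast at this
    rw [this]
    ring
  -- C(2p,p) = 2 * C(2p-1, p-1)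
  have hCC : Nat.choose (2 * p) p = 2 * Nat.choose (2 * p - 1) (p - 1) := by
    have key := Nat.choose_succ_succ (2 * p - 1) (p - 1)
    rw [show (2 * p - 1).succ = 2 * p by omega, show (p - 1).succ = p by omega] at key
    have e3 : Nat.choose (2 * p - 1) p = Nat.choose (2 * p - 1) (p - 1) := by
      rw [← Nat.choose_symm (show p ≤ 2 * p - 1 by omega)]
      congr 1
      omega
    rw [key, e3]
    ring
  rw [hCC] at h8
  push_cast at h8
  have h9 : (p : ℤ) ^ 3 ∣ 2 * ((Nat.choose (2 * p - 1) (p - 1) : ℤ) - 1) := by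
    have : 2 * ((Nat.choose (2 * p - 1) (p - 1) : ℤ) - 1)
        = 2 * (Nat.choose (2 * p - 1) (p - 1) : ℤ) - 2 := by ring
    rw [this]; exact h8
  have hcop : IsCoprime ((p : ℤ) ^ 3) (2 : ℤ) := by
    have : Nat.Coprime (p ^ 3) 2 := by
      apply Nat.Coprime.pow_left
      rw [Nat.coprime_two_right]
      exact hp.out.odd_of_ne_two (by omega)
    have := Nat.isCoprime_iff_coprime.mpr this
    exact_mod_cast this
  exact hcop.dvd_of_dvd_mul_left h9

/-- For a prime `p > 3`, Wolstenholme's theorem `C(2p-1, p-1) ≡ 1 (mod p³)` is equivalent,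
via `u_{2p} = (1 + C(2p-1,p-1)(2(p-1)! + (p-1)!²))/(2p)!`, to `u_{2p} ≡ u_p²/2 (mod p)`,
where `u_p = 1/p! + 1/p`.  In particular `u_{2p} ≡ w_p²/2 (mod p)` with
`w_p = ((p-1)! + 1)/p` the Wilson quotient. -/
theorem wolstenholme_artin_hasse (p : ℕ) [Fact p.Prime] (hp : 3 < p) :
    let up : ℚ := 1 / Nat.factorial p + 1 / p
    let u2p : ℚ := (1 + (Nat.choose (2 * p - 1) (p - 1) : ℚ)
        * (2 * (Nat.factorial (p - 1) : ℚ) + (Nat.factorial (p - 1) : ℚ) ^ 2))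
      / Nat.factorial (2 * p)
    let wp : ℚ := ((Nat.factorial (p - 1) : ℚ) + 1) / p
    ((Nat.choose (2 * p - 1) (p - 1) ≡ 1 [MOD p ^ 3]) ↔
        ((u2p : ZMod p) = ((up ^ 2 / 2 : ℚ) : ZMod p))) ∧
      (u2p : ZMod p) = ((wp ^ 2 / 2 : ℚ) : ZMod p) := by
  intro up u2p wp
  have hfp : Fact p.Prime := inferInstance
  have hppos : 0 < p := hfp.out.pos
  set q : ℕ := Nat.factorial (p - 1) with hqdef
  set C : ℕ := Nat.choose (2 * p - 1) (p - 1) with hCdef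
  -- Wilson
  have hqz : ((q : ℕ) : ZMod p) = -1 := ZMod.wilsons_lemma p
  have hdvdw : p ∣ q + 1 := by
    have : ((q + 1 : ℕ) : ZMod p) = 0 := by push_cast; rw [hqz]; ring
    exact (ZMod.natCast_eq_zero_iff _ _).mp this
  obtain ⟨w, hwq⟩ := hdvdw
  -- Wolstenholme
  obtain ⟨t, ht⟩ := WAH.wolstenholme p hp
  have hC : (C : ℤ) = 1 + (p : ℤ) ^ 3 * t := by rw [← hCdef] at ht; linarith
  -- factorial facts
  have hfact : Nat.factorial p = p * q := by
    conv_lhs => rw [show p = (p - 1) + 1 by omega]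
    rw [Nat.factorial_succ, show p - 1 + 1 = p by omega]
  have hCC : Nat.choose (2 * p) p = 2 * C := by
    have key := Nat.choose_succ_succ (2 * p - 1) (p - 1)
    rw [show (2 * p - 1).succ = 2 * p by omega, show (p - 1).succ = p by omega] at key
    have e3 : Nat.choose (2 * p - 1) p = Nat.choose (2 * p - 1) (p - 1) := by
      rw [← Nat.choose_symm (show p ≤ 2 * p - 1 by omega)]
      congr 1
      omega
    rw [key, e3, hCdef]
    ring
  have hF : Nat.factorial (2 * p) = 2 * C * (p * q) ^ 2 := by
    have h := Nat.choose_mul_factorial_mul_factorial (show p ≤ 2 * p by omega)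
    rw [show 2 * p - p = p by omega] at h
    rw [← h, hCC, hfact]
    ring
  -- rational casts of the facts
  have hp0 : (p : ℚ) ≠ 0 := Nat.cast_ne_zero.mpr (by omega)
  have hq0 : (q : ℚ) ≠ 0 := Nat.cast_ne_zero.mpr (Nat.factorial_ne_zero _)
  have hC0 : (C : ℚ) ≠ 0 := Nat.cast_ne_zero.mpr (Nat.choose_pos (by omega)).ne'
  have hqw : (q : ℚ) + 1 = (p : ℚ) * (w : ℚ) := by exact_mod_cast congrArg (Nat.cast (R := ℚ)) hwq
  have hCQ : (C : ℚ) = 1 + (p : ℚ) ^ 3 * (t : ℚ) := by exact_mod_cast hC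
  have hFQ : ((Nat.factorial (2 * p) : ℕ) : ℚ) = 2 * (C : ℚ) * ((p : ℚ) * (q : ℚ)) ^ 2 := by
    exact_mod_cast congrArg (Nat.cast (R := ℚ)) hF
  have hfactQ : ((Nat.factorial p : ℕ) : ℚ) = (p : ℚ) * (q : ℚ) := by
    exact_mod_cast congrArg (Nat.cast (R := ℚ)) hfact
  -- key rational identities
  have hu2p : u2p * ((2 * (C : ℤ) * (q : ℤ) ^ 2 : ℤ) : ℚ)
      = (((C : ℤ) * (w : ℤ) ^ 2 - (p : ℤ) * t : ℤ) : ℚ) := by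
    show ((1 + (C : ℚ) * (2 * (q : ℚ) + (q : ℚ) ^ 2)) / ((Nat.factorial (2 * p) : ℕ) : ℚ)) * _ = _
    rw [hFQ]
    push_cast
    rw [div_mul_eq_mul_div, div_eq_iff (by positivity)]
    linear_combination (2 * (C : ℚ) ^ 2 * (q : ℚ) ^ 2 * ((q : ℚ) + 1 + (p : ℚ) * w)) * hqw
      - 2 * (C : ℚ) * (q : ℚ) ^ 2 * hCQ
  have hup : up * (q : ℚ) = (w : ℚ) := by
    show (1 / ((Nat.factorial p : ℕ) : ℚ) + 1 / (p : ℚ)) * (q : ℚ) = (w : ℚ)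
    rw [hfactQ]
    field_simp
    linear_combination hqw
  have hup2 : (up ^ 2 / 2) * ((2 * (q : ℤ) ^ 2 : ℤ) : ℚ) = (((w : ℤ) ^ 2 : ℤ) : ℚ) := by
    push_cast
    linear_combination (up * (q : ℚ) + (w : ℚ)) * hup
  have hwp : wp * (q : ℚ) = (w : ℚ) * (q : ℚ) := by
    show (((q : ℕ) : ℚ) + 1) / (p : ℚ) * _ = _
    field_simp
    linear_combination hqw
  have hwpw : wp = (w : ℚ) := by
    have := mul_right_cancel₀ hq0 hwp
    exact this
  have hwp2 : (wp ^ 2 / 2) * ((2 : ℤ) : ℚ) = (((w : ℤ) ^ 2 : ℤ) : ℚ) := by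
    rw [hwpw]; push_cast; ring
  -- ZMod evaluations
  have hCz : ((C : ℤ) : ZMod p) = 1 := by
    rw [hC]; push_cast; simp [ZMod.natCast_self]
  have h2z : ((2 : ℕ) : ZMod p) ≠ 0 := by
    rw [Ne, ZMod.natCast_eq_zero_iff]
    intro h
    have := Nat.le_of_dvd (by omega) h
    omega
  have hqz' : ((q : ℤ) : ZMod p) = -1 := by push_cast; exact hqz
  have hD2z : ((2 * (C : ℤ) * (q : ℤ) ^ 2 : ℤ) : ZMod p) ≠ 0 := by
    push_cast
    rw [show (((C : ℕ) : ZMod p)) = ((C : ℤ) : ZMod p) by push_cast; rfl, hCz, hqz]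
    intro h
    apply h2z
    push_cast
    linear_combination h
  have hD1z : ((2 * (q : ℤ) ^ 2 : ℤ) : ZMod p) ≠ 0 := by
    push_cast
    rw [hqz]
    intro h
    apply h2z
    push_cast
    linear_combination h
  have hD0z : (((2 : ℤ) : ℤ) : ZMod p) ≠ 0 := by
    intro h; apply h2z; push_cast at h ⊢; exact h
  -- the three casts
  have e1 : (u2p : ZMod p)
      = (((C : ℤ) * (w : ℤ) ^ 2 - (p : ℤ) * t : ℤ) : ZMod p)
        / ((2 * (C : ℤ) * (q : ℤ) ^ 2 : ℤ) : ZMod p) :=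
    WAH.ratCast_eq_div p _ _ _ hD2z hu2p
  have e2 : ((up ^ 2 / 2 : ℚ) : ZMod p)
      = (((w : ℤ) ^ 2 : ℤ) : ZMod p) / ((2 * (q : ℤ) ^ 2 : ℤ) : ZMod p) :=
    WAH.ratCast_eq_div p _ _ _ hD1z hup2
  have e3 : ((wp ^ 2 / 2 : ℚ) : ZMod p)
      = (((w : ℤ) ^ 2 : ℤ) : ZMod p) / (((2 : ℤ) : ℤ) : ZMod p) :=
    WAH.ratCast_eq_div p _ _ _ hD0z hwp2
  have hpz : ((p : ℤ) : ZMod p) = 0 := by push_cast; exact ZMod.natCast_self p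
  have hval : (u2p : ZMod p) = ((up ^ 2 / 2 : ℚ) : ZMod p) := by
    rw [e1, e2]
    push_cast
    rw [show (((C : ℕ) : ZMod p)) = ((C : ℤ) : ZMod p) by push_cast; rfl, hCz, hqz,
      show (((p : ℕ) : ZMod p)) = 0 from ZMod.natCast_self p]
    ring
  have hval2 : (u2p : ZMod p) = ((wp ^ 2 / 2 : ℚ) : ZMod p) := by
    rw [e1, e3]
    push_cast
    rw [show (((C : ℕ) : ZMod p)) = ((C : ℤ) : ZMod p) by push_cast; rfl, hCz, hqz,
      show (((p : ℕ) : ZMod p)) = 0 from ZMod.natCast_self p]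
    ring
  refine ⟨iff_of_true ?_ hval, hval2⟩
  have hC1 : 1 ≤ C := Nat.choose_pos (by omega)
  rw [Nat.ModEq.comm, Nat.modEq_iff_dvd' hC1]
  have : ((p ^ 3 : ℕ) : ℤ) ∣ ((C - 1 : ℕ) : ℤ) := by
    push_cast [hC1]
    rw [hC]
    exact ⟨t, by ring⟩
  exact_mod_cast this
end
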